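/- For every {0,…,T}-valued stopping time τ of the natural filtration of Y, the function F^τ(s) := E^λ_y[|X_{σ(τ ∧ s)} − Y_{τ ∧ s}|], s ∈ {0,…,T}, where σ(τ') := ρ^{Root} ∧ (T − τ'), is nondecreasing in s. -/

import Mathlib

/-!
Condition on `X_0 = x` (Fubini). Passing from `s` to `s + 1` changes the integrand only on
`{s < τ}`, where, with `t = T - s - 1` and `W = X_{ρ ∧ t} - Y_s`, the term `|W + 1_{ρ > t} ξ_t|`
is replaced by `|W - η_s|`. The event `{s < τ}`, the event `{ρ > t}` and `W` are functions of
`ξ_0, …, ξ_{t-1}, η_0, …, η_{s-1}`, hence independent of the fair signs `ξ_t` and `η_s`.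
Averaging over these signs, the step reduces to `|w + c| + |w - c| ≤ |w + 1| + |w - 1|` for
`|c| ≤ 1`: a lazy step of `X` spreads `|X - Y|` less than a full step of `Y`.
-/

open MeasureTheory ProbabilityTheory

noncomputable section

namespace SwitchingIdentities

variable {Ω : Type*} [MeasurableSpace Ω]

/-- The increment `ξ` has the fair `±1` law. -/
def FairSign (P : Measure Ω) (ξ : Ω → ℤ) : Prop :=
  P {ω | ξ ω = 1} = 1 / 2 ∧ P {ω | ξ ω = -1} = 1 / 2

/-- `ξ` and `η` are the increment families of two independent simple symmetric random
walks on `ℤ`: all increments are measurable, fair `±1` coins, and the whole family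
`(ξ₀, ξ₁, …, η₀, η₁, …)` is independent. -/
def IndepSSRWIncrements (P : Measure Ω) (ξ η : ℕ → Ω → ℤ) : Prop :=
  (∀ n, Measurable (ξ n)) ∧ (∀ n, Measurable (η n)) ∧
  (∀ n, FairSign P (ξ n)) ∧ (∀ n, FairSign P (η n)) ∧
  iIndepFun (β := fun _ : ℕ ⊕ ℕ => ℤ) (Sum.elim ξ η) P

/-- The random walk with increments `ξ` started at `x`. -/
def walk (ξ : ℕ → Ω → ℤ) (x : ℤ) (t : ℕ) (ω : Ω) : ℤ :=
  x + ∑ i ∈ Finset.range t, ξ i ω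

/-- A Root continuation set: if `(t,m) ∈ D` then `(s,m) ∈ D` for all `s < t`. -/
def IsRootCont {α : Type*} (D : Set (ℕ × α)) : Prop :=
  ∀ t m, (t, m) ∈ D → ∀ s, s < t → (s, m) ∈ D

/-- A Rost continuation set: if `(t,m) ∈ D` then `(s,m) ∈ D` for all `s > t`. -/
def IsRostCont {α : Type*} (D : Set (ℕ × α)) : Prop :=
  ∀ t m, (t, m) ∈ D → ∀ s, t < s → (s, m) ∈ D

/-- `hit D Z ω = inf {t : (t, Z_t) ∉ D}` (junk value `0` if the walk never leaves `D`). -/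
def hit {α : Type*} (D : Set (ℕ × α)) (Z : ℕ → Ω → α) (ω : Ω) : ℕ :=
  sInf {t | (t, Z t ω) ∉ D}

/-- `hitBy D Z n ω = inf {t : (t, Z_t) ∉ D} ∧ n` (equal to `n` if the walk never leaves `D`). -/
def hitBy {α : Type*} (D : Set (ℕ × α)) (Z : ℕ → Ω → α) (n : ℕ) (ω : Ω) : ℕ :=
  sInf ({t | (t, Z t ω) ∉ D} ∪ {n})

/-- `revHitBy D Z T ω = inf {t : (T − t, Z_t) ∉ D} ∧ T`, the exit time of the time-reversed
space-time walk, capped at `T`. -/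
def revHitBy {α : Type*} (D : Set (ℕ × α)) (Z : ℕ → Ω → α) (T : ℕ) (ω : Ω) : ℕ :=
  sInf ({t | (T - t, Z t ω) ∉ D} ∪ {T})

/-- The potential function `U_m(z) = −∑_x |z − x| m({x})` of a measure `m` on `ℤ`. -/
def potential (m : Measure ℤ) (z : ℤ) : ℝ :=
  -∑' w : ℤ, (|z - w| : ℤ) * (m {w}).toReal

/-- A measure on `ℤ` has a finite first moment. -/
def FiniteFirstMoment (m : Measure ℤ) : Prop :=
  Integrable (fun z : ℤ => (z : ℝ)) m

/-- `τ` is a stopping time of the natural filtration of the process `Z`: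
`{τ ≤ n} ∈ σ(Z_0, …, Z_n)` for every `n`. -/
def IsNatStopping {α : Type*} [MeasurableSpace α] (Z : ℕ → Ω → α) (τ : Ω → ℕ) : Prop :=
  ∀ n : ℕ,
    MeasurableSet[MeasurableSpace.comap (fun ω => (fun i : Fin (n + 1) => Z i ω)) inferInstance]
      {ω | τ ω ≤ n}

/-- The law `μ^{Root}` of `X_{ρ^{Root}}` where `X` has increments `ξ` and `X_0 ∼ λ`. -/
def muRoot (P : Measure Ω) (ξ : ℕ → Ω → ℤ) (D : Set (ℕ × ℤ)) (lam : Measure ℤ) : Measure ℤ :=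
  Measure.map (fun p : ℤ × Ω => walk ξ p.1 (hit D (walk ξ p.1) p.2) p.2) (lam.prod P)

/-- The law `μ^{Root}_T` of `X_{ρ^{Root} ∧ T}` where `X` has increments `ξ` and `X_0 ∼ λ`. -/
def muRootT (P : Measure Ω) (ξ : ℕ → Ω → ℤ) (D : Set (ℕ × ℤ)) (lam : Measure ℤ) (T : ℕ) :
    Measure ℤ :=
  Measure.map (fun p : ℤ × Ω => walk ξ p.1 (hitBy D (walk ξ p.1) T p.2) p.2) (lam.prod P)

section Pathwise

variable {Ω : Type*}

section HitBy

variable {α : Type*} {D : Set (ℕ × α)} {Z : ℕ → Ω → α}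

lemma hitBy_le (n : ℕ) (ω : Ω) : hitBy D Z n ω ≤ n :=
  Nat.sInf_le (Set.mem_union_right _ rfl)

lemma lt_hitBy_iff {r n : ℕ} {ω : Ω} :
    r < hitBy D Z n ω ↔ r < n ∧ ∀ u ≤ r, (u, Z u ω) ∈ D := by
  have hne : ({t | (t, Z t ω) ∉ D} ∪ {n} : Set ℕ).Nonempty := ⟨n, Or.inr rfl⟩
  rw [hitBy, Nat.lt_iff_add_one_le, le_csInf_iff (OrderBot.bddBelow _) hne]
  simp only [Set.mem_union, Set.mem_ofPred_eq, Set.mem_singleton_iff, or_imp, forall_and,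
    forall_eq, ← Nat.lt_iff_add_one_le]
  refine and_comm.trans (and_congr_right fun _ => ⟨fun h u hu => ?_, fun h u hu => ?_⟩)
  · by_contra hD
    exact absurd (h u hD) (by omega)
  · by_contra hr
    exact hu (h u (by omega))

lemma hitBy_eq_min_hitBy_succ (n : ℕ) (ω : Ω) :
    hitBy D Z n ω = min (hitBy D Z (n + 1) ω) n :=
  eq_of_forall_lt_iff fun r => by
    simp only [lt_min_iff, lt_hitBy_iff]
    exact ⟨fun h => ⟨⟨by omega, h.2⟩, h.1⟩, fun h => ⟨h.2, h.1.2⟩⟩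

lemma measurableSet_lt_hitBy [MeasurableSpace α] {m : MeasurableSpace Ω} (hD : MeasurableSet D)
    {r : ℕ} (hZ : ∀ u ≤ r, Measurable[m] (Z u)) (n : ℕ) :
    MeasurableSet[m] {ω | r < hitBy D Z n ω} := by
  simp only [lt_hitBy_iff, Set.ofPred_and, Set.ofPred_forall]
  exact (MeasurableSet.const _).inter <| MeasurableSet.iInter fun u => MeasurableSet.iInter
    fun hu => hZ u hu (measurable_prodMk_left hD)

end HitBy

section Walk

variable {ξ : ℕ → Ω → ℤ} {x : ℤ} {D : Set (ℕ × ℤ)}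

def stoppedWalk (D : Set (ℕ × ℤ)) (ξ : ℕ → Ω → ℤ) (x : ℤ) (n : ℕ) (ω : Ω) : ℤ :=
  walk ξ x (hitBy D (walk ξ x) n ω) ω

lemma walk_succ (n : ℕ) (ω : Ω) : walk ξ x (n + 1) ω = walk ξ x n ω + ξ n ω := by
  rw [walk, walk, Finset.sum_range_succ, add_assoc]

lemma stoppedWalk_zero (ω : Ω) : stoppedWalk D ξ x 0 ω = x := by
  rw [stoppedWalk, Nat.le_zero.mp (hitBy_le 0 ω), walk, Finset.sum_range_zero, add_zero]

lemma stoppedWalk_succ (n : ℕ) (ω : Ω) :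
    stoppedWalk D ξ x (n + 1) ω
      = stoppedWalk D ξ x n ω + if n < hitBy D (walk ξ x) (n + 1) ω then ξ n ω else 0 := by
  have hle := hitBy_le (D := D) (Z := walk ξ x) (n + 1) ω
  rw [stoppedWalk, stoppedWalk, hitBy_eq_min_hitBy_succ n ω]
  split_ifs with h
  · rw [show hitBy D (walk ξ x) (n + 1) ω = n + 1 by omega, min_eq_right (by omega), walk_succ]
  · rw [min_eq_left (by omega), add_zero]

lemma abs_walk_le {ω : Ω} {n : ℕ} (hξ : ∀ i < n, |ξ i ω| ≤ 1) : |walk ξ x n ω| ≤ |x| + n := by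
  induction n with
  | zero => simp [walk]
  | succ n ih =>
    rw [walk_succ, Nat.cast_succ, ← add_assoc]
    exact (abs_add_le _ _).trans (add_le_add (ih fun i hi => hξ i (by omega)) (hξ n n.lt_succ_self))

lemma abs_stoppedWalk_le {ω : Ω} {n : ℕ} (hξ : ∀ i < n, |ξ i ω| ≤ 1) :
    |stoppedWalk D ξ x n ω| ≤ |x| + n := by
  have hle := hitBy_le (D := D) (Z := walk ξ x) n ω
  calc |stoppedWalk D ξ x n ω| ≤ |x| + hitBy D (walk ξ x) n ω :=
        abs_walk_le fun i hi => hξ i (by omega)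
    _ ≤ |x| + n := by gcongr

variable {m : MeasurableSpace Ω}

lemma measurable_walk {n : ℕ} (hξ : ∀ i < n, Measurable[m] (ξ i)) :
    Measurable[m] (walk ξ x n) :=
  measurable_const.add <| Finset.measurable_sum _ fun i hi => hξ i (Finset.mem_range.mp hi)

lemma measurable_stoppedWalk {n : ℕ} (hξ : ∀ i < n, Measurable[m] (ξ i)) :
    Measurable[m] (stoppedWalk D ξ x n) := by
  induction n with
  | zero => simpa only [funext stoppedWalk_zero] using measurable_const
  | succ n ih =>
    rw [funext (stoppedWalk_succ n)]
    refine (ih fun i hi => hξ i (by omega)).add (Measurable.ite ?_ (hξ n n.lt_succ_self)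
      measurable_const)
    exact measurableSet_lt_hitBy .of_discrete
      (fun u hu => measurable_walk fun i hi => hξ i (by omega)) _

end Walk

lemma IsNatStopping.measurableSet_le {α : Type*} [MeasurableSpace α] {m : MeasurableSpace Ω}
    {Z : ℕ → Ω → α} {τ : Ω → ℕ} (hτ : IsNatStopping Z τ) {n : ℕ}
    (hZ : ∀ u ≤ n, Measurable[m] (Z u)) : MeasurableSet[m] {ω | τ ω ≤ n} :=
  (measurable_pi_lambda _ fun i : Fin (n + 1) => hZ i i.is_le).comap_le _ (hτ n)

abbrev pastSigma (ξ η : ℕ → Ω → ℤ) (t s : ℕ) : MeasurableSpace Ω :=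
  ⨆ j ∈ Sum.inl '' Set.Iio t ∪ Sum.inr '' Set.Iio s,
    MeasurableSpace.comap (Sum.elim ξ η j) inferInstance

section PastSigma

variable {ξ η : ℕ → Ω → ℤ} {t s : ℕ}

lemma measurable_pastSigma_left {i : ℕ} (hi : i < t) : Measurable[pastSigma ξ η t s] (ξ i) :=
  measurable_iff_comap_le.mpr <| le_iSup₂
    (f := fun j (_ : j ∈ Sum.inl '' Set.Iio t ∪ Sum.inr '' Set.Iio s) =>
      MeasurableSpace.comap (Sum.elim ξ η j) inferInstance) (Sum.inl i) (Or.inl ⟨i, hi, rfl⟩)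

lemma measurable_pastSigma_right {j : ℕ} (hj : j < s) : Measurable[pastSigma ξ η t s] (η j) :=
  measurable_iff_comap_le.mpr <| le_iSup₂
    (f := fun j (_ : j ∈ Sum.inl '' Set.Iio t ∪ Sum.inr '' Set.Iio s) =>
      MeasurableSpace.comap (Sum.elim ξ η j) inferInstance) (Sum.inr j) (Or.inr ⟨j, hj, rfl⟩)

end PastSigma

section Gap

variable {ξ η : ℕ → Ω → ℤ} {D : Set (ℕ × ℤ)} {x y : ℤ} {τ : Ω → ℕ} {T s t : ℕ} {ω : Ω}

lemma abs_stoppedWalk_sub_walk_le {n k : ℕ} (hξ : ∀ i < n, |ξ i ω| ≤ 1)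
    (hη : ∀ i < k, |η i ω| ≤ 1) :
    |stoppedWalk D ξ x n ω - walk η y k ω| ≤ |x| + |y| + n + k := by
  linarith [abs_sub (stoppedWalk D ξ x n ω) (walk η y k ω), abs_stoppedWalk_le (D := D) (x := x) hξ,
    abs_walk_le (x := y) hη]

lemma measurable_stoppedWalk_sub_walk {m : MeasurableSpace Ω} {n k : ℕ}
    (hξ : ∀ i < n, Measurable[m] (ξ i)) (hη : ∀ j < k, Measurable[m] (η j)) :
    Measurable[m] fun ω => stoppedWalk D ξ x n ω - walk η y k ω :=
  (Measurable.of_discrete (f := fun q : ℤ × ℤ => q.1 - q.2)).comp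
    ((measurable_stoppedWalk hξ).prodMk (measurable_walk hη))

-- `|X_{σ(τ ∧ s)} - Y_{τ ∧ s}|`, with `σ(τ') = ρ ∧ (T - τ')` and `X_0 = x`, is the integrand
-- of `F^τ(s)`.
def interpGap (D : Set (ℕ × ℤ)) (ξ η : ℕ → Ω → ℤ) (x y : ℤ) (τ : Ω → ℕ) (T s : ℕ) (ω : Ω) :
    ℤ :=
  |stoppedWalk D ξ x (T - min (τ ω) s) ω - walk η y (min (τ ω) s) ω|

lemma interpGap_nonneg : 0 ≤ interpGap D ξ η x y τ T s ω :=
  abs_nonneg _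

lemma interpGap_le (hξ : ∀ i, |ξ i ω| ≤ 1) (hη : ∀ i, |η i ω| ≤ 1) :
    interpGap D ξ η x y τ T s ω ≤ |x| + |y| + T + s := by
  have hT : ((T - min (τ ω) s : ℕ) : ℤ) ≤ T := Nat.cast_le.mpr (Nat.sub_le _ _)
  have hs : ((min (τ ω) s : ℕ) : ℤ) ≤ s := Nat.cast_le.mpr (min_le_right _ _)
  have := abs_stoppedWalk_sub_walk_le (D := D) (x := x) (y := y) (n := T - min (τ ω) s)
    (k := min (τ ω) s) (fun i _ => hξ i) (fun i _ => hη i)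
  rw [interpGap]
  linarith

lemma interpGap_of_lt (hsτ : s < τ ω) :
    interpGap D ξ η x y τ (t + s + 1) s ω = |stoppedWalk D ξ x t ω - walk η y s ω
      + (if t < hitBy D (walk ξ x) (t + 1) ω then 1 else 0) * ξ t ω| := by
  rw [interpGap, min_eq_right hsτ.le, show t + s + 1 - s = t + 1 by omega, stoppedWalk_succ,
    boole_mul]
  ring_nf

lemma interpGap_succ_of_lt (hsτ : s < τ ω) :
    interpGap D ξ η x y τ (t + s + 1) (s + 1) ω
      = |stoppedWalk D ξ x t ω - walk η y s ω - η s ω| := by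
  rw [interpGap, min_eq_right hsτ, show t + s + 1 - (s + 1) = t by omega, walk_succ]
  ring_nf

lemma interpGap_succ_of_le (hτs : τ ω ≤ s) :
    interpGap D ξ η x y τ T (s + 1) ω = interpGap D ξ η x y τ T s ω := by
  rw [interpGap, interpGap, min_eq_left hτs, min_eq_left (hτs.trans s.le_succ)]

end Gap

end Pathwise

lemma abs_add_add_abs_sub_le {w c : ℝ} (hc : |c| ≤ 1) :
    |w + c| + |w - c| ≤ |w + 1| + |w - 1| := by
  rw [abs_le] at hc
  rcases abs_cases (w + c) with h1 | h1 <;> rcases abs_cases (w - c) with h2 | h2 <;>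
    rcases abs_cases (w + 1) with h3 | h3 <;> rcases abs_cases (w - 1) with h4 | h4 <;>
    linarith

section Probability

lemma iIndepFun.indepFun_of_measurable_iSup {ι β γ : Type*} [MeasurableSpace β]
    [MeasurableSpace γ] {f : ι → Ω → β} {P : Measure Ω} (hf : iIndepFun f P)
    (hfm : ∀ i, Measurable (f i)) {S : Set ι} {i : ι} (hi : i ∉ S) {g : Ω → γ}
    (hg : Measurable[⨆ j ∈ S, MeasurableSpace.comap (f j) inferInstance] g) :
    IndepFun g (f i) P := by
  have hST := indep_iSup_of_disjoint (fun j => (hfm j).comap_le) hf.iIndep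
    (Set.disjoint_singleton_right.mpr hi)
  exact (IndepFun_iff_Indep _ _ _).mpr <| indep_of_indep_of_le_right
    (indep_of_indep_of_le_left hST hg.comap_le)
    (le_iSup₂ (f := fun j (_ : j ∈ ({i} : Set ι)) => MeasurableSpace.comap (f j) inferInstance)
      i rfl)

lemma pastSigma_le {ξ η : ℕ → Ω → ℤ} {t s : ℕ} (hξ : ∀ i, Measurable (ξ i))
    (hη : ∀ j, Measurable (η j)) : pastSigma ξ η t s ≤ ‹MeasurableSpace Ω› :=
  iSup₂_le fun j _ => by cases j with
    | inl i => exact (hξ i).comap_le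
    | inr i => exact (hη i).comap_le

lemma IndepSSRWIncrements.indepFun_left_of_measurable_pastSigma {P : Measure Ω}
    {ξ η : ℕ → Ω → ℤ} {t s : ℕ} (h : IndepSSRWIncrements P ξ η) {γ : Type*} [MeasurableSpace γ]
    {g : Ω → γ} (hg : Measurable[pastSigma ξ η t s] g) :
    IndepFun g (ξ t) P :=
  iIndepFun.indepFun_of_measurable_iSup h.2.2.2.2 (i := .inl t)
    (fun | .inl i => h.1 i | .inr j => h.2.1 j) (by simp) hg

lemma IndepSSRWIncrements.indepFun_right_of_measurable_pastSigma {P : Measure Ω}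
    {ξ η : ℕ → Ω → ℤ} {t s : ℕ} (h : IndepSSRWIncrements P ξ η) {γ : Type*} [MeasurableSpace γ]
    {g : Ω → γ} (hg : Measurable[pastSigma ξ η t s] g) :
    IndepFun g (η s) P :=
  iIndepFun.indepFun_of_measurable_iSup h.2.2.2.2 (i := .inr s)
    (fun | .inl i => h.1 i | .inr j => h.2.1 j) (by simp) hg

lemma integral_le_integral_of_eqOn_compl {μ : Measure Ω} {f g : Ω → ℝ} {E : Set Ω}
    (hE : MeasurableSet E) (hf : Integrable f μ) (hg : Integrable g μ) (hfg : Set.EqOn f g Eᶜ)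
    (hle : ∫ ω, E.indicator f ω ∂μ ≤ ∫ ω, E.indicator g ω ∂μ) : ∫ ω, f ω ∂μ ≤ ∫ ω, g ω ∂μ := by
  rw [← integral_add_compl hE hf, ← integral_add_compl hE hg, setIntegral_congr_fun hE.compl hfg,
    ← integral_indicator hE, ← integral_indicator hE]
  linarith

lemma integral_ite_eq_half {P : Measure Ω} {χ : Ω → ℤ} (hχ : Measurable χ) {c : ℤ}
    (hc : P {ω | χ ω = c} = 1 / 2) :
    ∫ ω, (if χ ω = c then (1 : ℝ) else 0) ∂P = 1 / 2 := by
  have hind : (fun ω => if χ ω = c then (1 : ℝ) else 0) = (χ ⁻¹' {c}).indicator 1 := by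
    ext ω
    by_cases h : χ ω = c <;> simp [h]
  rw [hind, integral_indicator_one (hχ (measurableSet_singleton c)), measureReal_def]
  change (P {ω | χ ω = c}).toReal = _
  rw [hc]
  norm_num

variable {P : Measure Ω} [IsProbabilityMeasure P]

lemma FairSign.ae_eq_one_or_eq_neg_one {χ : Ω → ℤ} (hχ : Measurable χ) (h : FairSign P χ) :
    ∀ᵐ ω ∂P, χ ω = 1 ∨ χ ω = -1 := by
  have h1 : MeasurableSet {ω | χ ω = 1} := hχ (measurableSet_singleton _)
  have h2 : MeasurableSet {ω | χ ω = -1} := hχ (measurableSet_singleton _)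
  have hdisj : Disjoint {ω | χ ω = 1} {ω | χ ω = -1} :=
    Set.disjoint_left.mpr fun ω h1 h2 => by simp_all
  refine (ae_iff_measure_eq ?_).mpr ?_
  · rw [Set.ofPred_or]
    exact (h1.union h2).nullMeasurableSet
  · rw [Set.ofPred_or, measure_union hdisj h2, h.1, h.2, ENNReal.add_halves, measure_univ]

lemma FairSign.ae_abs_le_one {χ : Ω → ℤ} (hχ : Measurable χ) (h : FairSign P χ) :
    ∀ᵐ ω ∂P, |χ ω| ≤ 1 :=
  (h.ae_eq_one_or_eq_neg_one hχ).mono fun ω hω => by rcases hω with hω | hω <;> simp [hω]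

lemma integral_comp_fairSign {χ : Ω → ℤ} (hχ : Measurable χ) (hfair : FairSign P χ)
    {φ : Ω → ℤ → ℝ} (hind : ∀ c, IndepFun (fun ω => φ ω c) χ P)
    (hφ : ∀ c, Integrable (fun ω => φ ω c) P) :
    ∫ ω, φ ω (χ ω) ∂P = (∫ ω, φ ω 1 ∂P + ∫ ω, φ ω (-1) ∂P) / 2 := by
  set g : ℤ → ℤ → ℝ := fun c z => if z = c then 1 else 0
  have hg : ∀ c, Measurable (g c) := fun c => .of_discrete
  have hsplit : ∀ᵐ ω ∂P, φ ω (χ ω) = φ ω 1 * g 1 (χ ω) + φ ω (-1) * g (-1) (χ ω) := by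
    filter_upwards [hfair.ae_eq_one_or_eq_neg_one hχ] with ω hω
    rcases hω with hω | hω <;> simp [g, hω]
  have hhalf : ∀ c, P {ω | χ ω = c} = 1 / 2 →
      ∫ ω, φ ω c * g c (χ ω) ∂P = (∫ ω, φ ω c ∂P) / 2 := by
    intro c hc
    have hindc : IndepFun (fun ω => φ ω c) (fun ω => g c (χ ω)) P :=
      (hind c).comp measurable_id (hg c)
    rw [hindc.integral_fun_mul_eq_mul_integral (hφ c).aestronglyMeasurable
      ((hg c).comp hχ).aestronglyMeasurable, integral_ite_eq_half hχ hc]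
    ring
  have hint : ∀ c, Integrable (fun ω => φ ω c * g c (χ ω)) P := fun c =>
    (hφ c).mul_bdd ((hg c).comp hχ).aestronglyMeasurable (c := 1) (ae_of_all _ fun ω => by
      simp only [g]; split_ifs <;> simp)
  rw [integral_congr_ae hsplit, integral_add (hint 1) (hint (-1)), hhalf 1 hfair.1,
    hhalf (-1) hfair.2]
  ring

lemma integral_comp_fairSign_le {χ₁ χ₂ : Ω → ℤ} (hχ₁ : Measurable χ₁) (hfair₁ : FairSign P χ₁)
    (hχ₂ : Measurable χ₂) (hfair₂ : FairSign P χ₂) {φ₁ φ₂ : Ω → ℤ → ℝ}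
    (hind₁ : ∀ c, IndepFun (fun ω => φ₁ ω c) χ₁ P)
    (hind₂ : ∀ c, IndepFun (fun ω => φ₂ ω c) χ₂ P)
    (hφ₁ : ∀ c, Integrable (fun ω => φ₁ ω c) P)
    (hφ₂ : ∀ c, Integrable (fun ω => φ₂ ω c) P)
    (hle : ∀ ω, φ₁ ω 1 + φ₁ ω (-1) ≤ φ₂ ω 1 + φ₂ ω (-1)) :
    ∫ ω, φ₁ ω (χ₁ ω) ∂P ≤ ∫ ω, φ₂ ω (χ₂ ω) ∂P := by
  rw [integral_comp_fairSign hχ₁ hfair₁ hind₁ hφ₁, integral_comp_fairSign hχ₂ hfair₂ hind₂ hφ₂,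
    ← integral_add (hφ₁ 1) (hφ₁ (-1)), ← integral_add (hφ₂ 1) (hφ₂ (-1))]
  gcongr ?_ / 2
  exact integral_mono ((hφ₁ 1).add (hφ₁ (-1))) ((hφ₂ 1).add (hφ₂ (-1))) hle

variable {ξ η : ℕ → Ω → ℤ} {D : Set (ℕ × ℤ)} {y : ℤ} {τ : Ω → ℕ} {T s t : ℕ}

lemma IndepSSRWIncrements.ae_abs_le_one (h : IndepSSRWIncrements P ξ η) :
    ∀ᵐ ω ∂P, ∀ i, |ξ i ω| ≤ 1 ∧ |η i ω| ≤ 1 :=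
  ae_all_iff.mpr fun i => (h.2.2.1 i |>.ae_abs_le_one (h.1 i)).and
    (h.2.2.2.1 i |>.ae_abs_le_one (h.2.1 i))

lemma integral_lazy_step_le (h : IndepSSRWIncrements P ξ η) {W a : Ω → ℤ} {E : Set Ω} {K : ℤ}
    (hW : Measurable[pastSigma ξ η t s] W) (ha : Measurable[pastSigma ξ η t s] a)
    (hE : MeasurableSet[pastSigma ξ η t s] E) (hWK : ∀ᵐ ω ∂P, |W ω| ≤ K) (ha1 : ∀ ω, |a ω| ≤ 1) :
    ∫ ω, E.indicator (fun ω => ((|W ω + a ω * ξ t ω| : ℤ) : ℝ)) ω ∂P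
      ≤ ∫ ω, E.indicator (fun ω => ((|W ω - η s ω| : ℤ) : ℝ)) ω ∂P := by
  set φ₁ : Ω → ℤ → ℝ := fun ω c => E.indicator (fun ω => ((|W ω + a ω * c| : ℤ) : ℝ)) ω
  set φ₂ : Ω → ℤ → ℝ := fun ω c => E.indicator (fun ω => ((|W ω - c| : ℤ) : ℝ)) ω
  have hφ₁m : ∀ c, Measurable[pastSigma ξ η t s] fun ω => φ₁ ω c := fun c =>
    ((Measurable.of_discrete (f := fun q : ℤ × ℤ => ((|q.1 + q.2 * c| : ℤ) : ℝ))).comp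
      (hW.prodMk ha)).indicator hE
  have hφ₂m : ∀ c, Measurable[pastSigma ξ η t s] fun ω => φ₂ ω c := fun c =>
    ((Measurable.of_discrete (f := fun w : ℤ => ((|w - c| : ℤ) : ℝ))).comp hW).indicator hE
  have hle := pastSigma_le (t := t) (s := s) h.1 h.2.1
  have hint : ∀ (f : Ω → ℝ) (c : ℤ), Measurable[pastSigma ξ η t s] f →
      (∀ ω, |W ω| ≤ K → ‖f ω‖ ≤ K + |c|) → Integrable f P := fun f c hf hfK =>
    Integrable.of_bound (hf.mono hle le_rfl).aestronglyMeasurable _ (hWK.mono fun ω => hfK ω)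
  have hnorm : ∀ (z : ℤ) (ω : Ω), ‖E.indicator (fun _ => ((|z| : ℤ) : ℝ)) ω‖ ≤ ((|z| : ℤ) : ℝ) :=
    fun z ω => (norm_indicator_le_norm_self _ _).trans (by simp)
  refine integral_comp_fairSign_le (h.1 t) (h.2.2.1 t) (h.2.1 s) (h.2.2.2.1 s)
    (fun c => h.indepFun_left_of_measurable_pastSigma (hφ₁m c))
    (fun c => h.indepFun_right_of_measurable_pastSigma (hφ₂m c))
    (fun c => hint _ c (hφ₁m c) fun ω hω => ?_) (fun c => hint _ c (hφ₂m c) fun ω hω => ?_)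
    fun ω => ?_
  · refine (hnorm (W ω + a ω * c) ω).trans ?_
    have : |a ω * c| ≤ |c| := by
      rw [abs_mul]
      exact mul_le_of_le_one_left (abs_nonneg _) (ha1 ω)
    have hK : |W ω + a ω * c| ≤ K + |c| := (abs_add_le _ _).trans (add_le_add hω this)
    exact_mod_cast hK
  · refine (hnorm (W ω - c) ω).trans ?_
    have hK : |W ω - c| ≤ K + |c| := (abs_sub _ _).trans (add_le_add hω le_rfl)
    exact_mod_cast hK
  · by_cases hω : ω ∈ E
    · simp only [φ₁, φ₂, Set.indicator_of_mem hω, mul_one, mul_neg, ← sub_eq_add_neg,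
        sub_neg_eq_add]
      have := abs_add_add_abs_sub_le (w := (W ω : ℝ)) (c := a ω) (by exact_mod_cast ha1 ω)
      push_cast
      linarith
    · simp only [φ₁, φ₂, Set.indicator_of_notMem hω, add_zero, le_refl]

lemma IsNatStopping.measurable (hτ : IsNatStopping (walk η y) τ) (hη : ∀ i, Measurable (η i)) :
    Measurable τ :=
  measurable_of_Iic fun _ => hτ.measurableSet_le fun _ _ => measurable_walk fun i _ => hη i

lemma measurable_interpGap {x : ℤ} (hξ : ∀ i, Measurable (ξ i)) (hη : ∀ i, Measurable (η i))
    (hτ : Measurable τ) : Measurable (interpGap D ξ η x y τ T s) := by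
  have hsection : ∀ k : ℕ, Measurable fun ω => |stoppedWalk D ξ x (T - k) ω - walk η y k ω| :=
    fun k => (Measurable.of_discrete (f := fun z : ℤ => |z|)).comp
      (measurable_stoppedWalk_sub_walk (fun i _ => hξ i) (fun j _ => hη j))
  have hpair : Measurable fun p : ℕ × Ω => |stoppedWalk D ξ x (T - p.1) p.2 - walk η y p.1 p.2| :=
    measurable_from_prod_countable_right hsection
  have hidx : Measurable fun ω => (min (τ ω) s, ω) :=
    ((Measurable.of_discrete (f := fun k : ℕ => min k s)).comp hτ).prodMk measurable_id
  unfold interpGap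
  simpa only [Function.comp_def] using hpair.comp hidx

lemma integrable_interpGap (h : IndepSSRWIncrements P ξ η) (hτ : IsNatStopping (walk η y) τ)
    (x : ℤ) : Integrable (fun ω => (interpGap D ξ η x y τ T s ω : ℝ)) P := by
  refine Integrable.of_bound ((Measurable.of_discrete.comp (measurable_interpGap h.1 h.2.1
    (hτ.measurable h.2.1))).aestronglyMeasurable) (|x| + |y| + T + s) ?_
  filter_upwards [h.ae_abs_le_one] with ω hω
  rw [Real.norm_eq_abs, abs_of_nonneg (Int.cast_nonneg interpGap_nonneg)]
  exact_mod_cast interpGap_le (fun i => (hω i).1) (fun i => (hω i).2)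

lemma integral_interpGap_le_succ (h : IndepSSRWIncrements P ξ η)
    (hτ : IsNatStopping (walk η y) τ) (hsT : s + 1 ≤ T) (x : ℤ) :
    ∫ ω, (interpGap D ξ η x y τ T s ω : ℝ) ∂P
      ≤ ∫ ω, (interpGap D ξ η x y τ T (s + 1) ω : ℝ) ∂P := by
  obtain ⟨t, rfl⟩ : ∃ t, T = t + s + 1 := ⟨T - (s + 1), by omega⟩
  have hξ : ∀ i < t, Measurable[pastSigma ξ η t s] (ξ i) := fun i => measurable_pastSigma_left
  have hη : ∀ j < s, Measurable[pastSigma ξ η t s] (η j) := fun j => measurable_pastSigma_right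
  have hE : MeasurableSet[pastSigma ξ η t s] {ω | s < τ ω} := by
    simpa only [Set.compl_ofPred, not_le] using (hτ.measurableSet_le (n := s) fun u hu =>
      measurable_walk fun j hj => hη j (by omega)).compl
  have hC : MeasurableSet[pastSigma ξ η t s] {ω | t < hitBy D (walk ξ x) (t + 1) ω} :=
    measurableSet_lt_hitBy .of_discrete
      (fun u hu => measurable_walk fun i hi => hξ i (by omega)) _
  have hWK : ∀ᵐ ω ∂P, |stoppedWalk D ξ x t ω - walk η y s ω| ≤ |x| + |y| + t + s := by
    filter_upwards [h.ae_abs_le_one] with ω hω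
    exact abs_stoppedWalk_sub_walk_le (fun i _ => (hω i).1) (fun i _ => (hω i).2)
  refine integral_le_integral_of_eqOn_compl (pastSigma_le h.1 h.2.1 _ hE)
    (integrable_interpGap h hτ x) (integrable_interpGap h hτ x)
    (fun ω hω => by simp only [interpGap_succ_of_le (not_lt.mp hω)]) ?_
  have hlazy := integral_lazy_step_le h (W := fun ω => stoppedWalk D ξ x t ω - walk η y s ω)
    (a := fun ω => if t < hitBy D (walk ξ x) (t + 1) ω then 1 else 0)
    (measurable_stoppedWalk_sub_walk hξ hη) (Measurable.ite hC measurable_const measurable_const)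
    hE hWK fun ω => by split_ifs <;> simp
  convert hlazy using 2
  · exact funext <| congrFun <| Set.indicator_congr fun ω hω => by rw [interpGap_of_lt hω]
  · exact funext <| congrFun <| Set.indicator_congr fun ω hω => by rw [interpGap_succ_of_lt hω]

lemma integrable_interpGap_prod (h : IndepSSRWIncrements P ξ η) (hτ : IsNatStopping (walk η y) τ)
    {lam : Measure ℤ} [IsFiniteMeasure lam] (hlam : FiniteFirstMoment lam) :
    Integrable (fun p : ℤ × Ω => (interpGap D ξ η p.1 y τ T s p.2 : ℝ)) (lam.prod P) := by
  refine ((hlam.abs.add (integrable_const (|(y : ℝ)| + T + s))).comp_fst P).mono'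
    (measurable_from_prod_countable_right
      (f := fun p : ℤ × Ω => (interpGap D ξ η p.1 y τ T s p.2 : ℝ)) fun _ =>
      (Measurable.of_discrete (f := fun z : ℤ => (z : ℝ))).comp
        (measurable_interpGap h.1 h.2.1 (hτ.measurable h.2.1))).aestronglyMeasurable ?_
  filter_upwards [Measure.quasiMeasurePreserving_snd.ae h.ae_abs_le_one] with p hp
  have hgap : ((interpGap D ξ η p.1 y τ T s p.2 : ℤ) : ℝ) ≤ ((|p.1| + |y| + T + s : ℤ) : ℝ) :=
    Int.cast_le.mpr (interpGap_le (fun i => (hp i).1) (fun i => (hp i).2))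
  rw [Real.norm_eq_abs, abs_of_nonneg (Int.cast_nonneg interpGap_nonneg), Pi.add_apply]
  push_cast at hgap
  linarith

end Probability

theorem interpolating_function_monotone_general
    (P : Measure Ω) [IsProbabilityMeasure P] (ξ η : ℕ → Ω → ℤ)
    (h : IndepSSRWIncrements P ξ η)
    (D : Set (ℕ × ℤ))
    (lam : Measure ℤ) [IsProbabilityMeasure lam] (hlam : FiniteFirstMoment lam)
    (T : ℕ) (y : ℤ)
    (τ : Ω → ℕ) (hτ : IsNatStopping (walk η y) τ)
    (F : ℕ → ℝ)
    (hF : ∀ s, F s = ∫ p : ℤ × Ω,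
      ((|walk ξ p.1 (hitBy D (walk ξ p.1) (T - min (τ p.2) s) p.2) p.2
        - walk η y (min (τ p.2) s) p.2| : ℤ) : ℝ) ∂(lam.prod P)) :
    ∀ s₁ s₂, s₁ ≤ s₂ → s₂ ≤ T → F s₁ ≤ F s₂ := by
  have hF' : ∀ s, F s = ∫ p : ℤ × Ω, (interpGap D ξ η p.1 y τ T s p.2 : ℝ) ∂(lam.prod P) := hF
  have hint : ∀ s, Integrable (fun p : ℤ × Ω => (interpGap D ξ η p.1 y τ T s p.2 : ℝ))
      (lam.prod P) := fun s => integrable_interpGap_prod h hτ hlam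
  have hstep : ∀ s, s + 1 ≤ T → F s ≤ F (s + 1) := by
    intro s hs
    rw [hF', hF', integral_prod _ (hint s), integral_prod _ (hint (s + 1))]
    exact integral_mono (hint s).integral_prod_left (hint (s + 1)).integral_prod_left
      fun x => integral_interpGap_le_succ h hτ hs x
  intro s₁ s₂ h12 h2T
  exact monotoneOn_of_le_add_one Set.ordConnected_Iic (fun s _ _ hs => hstep s hs)
    (h12.trans h2T) h2T h12

/-- for every `{0,…,T}`-valued stopping time `τ` of the natural filtration
of `Y`, the function `F^τ(s) = E^λ_y[|X_{σ(τ∧s)} − Y_{τ∧s}|]`, with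
`σ(τ') = ρ^{Root} ∧ (T − τ')`, is nondecreasing on `{0, …, T}`. -/
theorem interpolating_function_monotone
    (P : Measure Ω) [IsProbabilityMeasure P] (ξ η : ℕ → Ω → ℤ)
    (h : IndepSSRWIncrements P ξ η)
    (D : Set (ℕ × ℤ)) (hD : IsRootCont D)
    (lam : Measure ℤ) [IsProbabilityMeasure lam] (hlam : FiniteFirstMoment lam)
    (T : ℕ) (y : ℤ)
    (hUI : UniformIntegrable
      (fun (t : ℕ) (p : ℤ × Ω) => ((walk ξ p.1 (hitBy D (walk ξ p.1) t p.2) p.2 : ℤ) : ℝ))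
      1 (lam.prod P))
    (τ : Ω → ℕ) (hτ : IsNatStopping (walk η y) τ) (hτT : ∀ ω, τ ω ≤ T)
    (F : ℕ → ℝ)
    (hF : ∀ s, F s = ∫ p : ℤ × Ω,
      ((|walk ξ p.1 (hitBy D (walk ξ p.1) (T - min (τ p.2) s) p.2) p.2
        - walk η y (min (τ p.2) s) p.2| : ℤ) : ℝ) ∂(lam.prod P)) :
    ∀ s₁ s₂, s₁ ≤ s₂ → s₂ ≤ T → F s₁ ≤ F s₂ :=
  interpolating_function_monotone_general P ξ η h D lam hlam T y τ hτ F hF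

end SwitchingIdentities
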